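/- arXiv:2212.02922 — 3 statements merged into one kernel-verified Lean document; each statement's English description precedes it below -/
import Mathlib

section
/- Let A ∈ ℂ^{nN×nN} be a block matrix with N×N blocks A_{ij} ∈ ℂ^{n×n}. Then σ̄(A) ≤ max_i max{r_i, c_i}, where r_i = Σ_{j=1}^N σ̄(A_{ij}) and c_i = Σ_{j=1}^N σ̄(A_{ji}). -/
/-!
Split `x` into blocks `x_j` and bound `‖(A x)_i‖ ≤ ∑_j σ̄(A_{ij}) ‖x_j‖`. This reduces the claim
to the Schur test for the nonnegative matrix `σ_{ij} = σ̄(A_{ij})`: weighting Cauchy–Schwarz by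
`σ_{ij}` gives `(∑_j σ_{ij} u_j)² ≤ r_i ∑_j σ_{ij} u_j²`, and summing over `i` and swapping
the sums gives `∑_i (∑_j σ_{ij} u_j)² ≤ (max_i r_i)(max_j c_j) ∑_j u_j²`.
-/

/-- The largest singular value of a square complex matrix. -/
noncomputable def sigmaMax {m : Type*} [Fintype m] [DecidableEq m]
    (A : Matrix m m ℂ) : ℝ :=
  ‖Matrix.toEuclideanCLM (𝕜 := ℂ) A‖

open Finset Matrix

theorem sum_sq_sum_mul_le_of_row_col_sum_le {ι κ : Type*} [Fintype ι] [Fintype κ]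
    {σ : ι → κ → ℝ} (hσ : ∀ i j, 0 ≤ σ i j) {R C : ℝ} (hR₀ : 0 ≤ R)
    (hR : ∀ i, ∑ j, σ i j ≤ R) (hC : ∀ j, ∑ i, σ i j ≤ C) (u : κ → ℝ) :
    ∑ i, (∑ j, σ i j * u j) ^ 2 ≤ R * C * ∑ j, u j ^ 2 := by
  have hrow : ∀ i, (∑ j, σ i j * u j) ^ 2 ≤ R * ∑ j, σ i j * u j ^ 2 := fun i => by
    refine (sum_sq_le_sum_mul_sum_of_sq_le_mul _ (fun j _ => hσ i j)
      (fun j _ => mul_nonneg (hσ i j) (sq_nonneg (u j))) fun j _ => le_of_eq (by ring)).trans ?_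
    exact mul_le_mul_of_nonneg_right (hR i)
      (sum_nonneg fun j _ => mul_nonneg (hσ i j) (sq_nonneg _))
  calc ∑ i, (∑ j, σ i j * u j) ^ 2 ≤ ∑ i, R * ∑ j, σ i j * u j ^ 2 :=
        sum_le_sum fun i _ => hrow i
    _ = R * ∑ j, (∑ i, σ i j) * u j ^ 2 := by
      rw [← mul_sum, sum_comm]
      simp only [sum_mul]
    _ ≤ R * ∑ j, C * u j ^ 2 := by gcongr with j; exact hC j
    _ = R * C * ∑ j, u j ^ 2 := by rw [← mul_sum, mul_assoc]

section Blocks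

variable {𝕜 ι m : Type*} [RCLike 𝕜] [Fintype ι] [Fintype m]

def blockVec (x : EuclideanSpace 𝕜 (ι × m)) (j : ι) : EuclideanSpace 𝕜 m :=
  WithLp.toLp 2 fun b => x (j, b)

theorem norm_sq_eq_sum_norm_sq_blockVec (x : EuclideanSpace 𝕜 (ι × m)) :
    ‖x‖ ^ 2 = ∑ j, ‖blockVec x j‖ ^ 2 := by
  simp only [EuclideanSpace.norm_sq_eq, Fintype.sum_prod_type]
  rfl

variable [DecidableEq ι] [DecidableEq m]

theorem blockVec_toEuclideanCLM (A : Matrix (ι × m) (ι × m) 𝕜) (x : EuclideanSpace 𝕜 (ι × m))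
    (i : ι) : blockVec (toEuclideanCLM (𝕜 := 𝕜) A x) i =
      ∑ j, toEuclideanCLM (𝕜 := 𝕜) ((comp ι ι m m 𝕜).symm A i j) (blockVec x j) := by
  ext a
  simp [blockVec, mulVec, dotProduct, Fintype.sum_prod_type]

theorem norm_toEuclideanCLM_le_sqrt_of_block_sums (A : Matrix (ι × m) (ι × m) 𝕜) {R C : ℝ}
    (hR₀ : 0 ≤ R)
    (hR : ∀ i, ∑ j, ‖toEuclideanCLM (𝕜 := 𝕜) ((comp ι ι m m 𝕜).symm A i j)‖ ≤ R)
    (hC : ∀ j, ∑ i, ‖toEuclideanCLM (𝕜 := 𝕜) ((comp ι ι m m 𝕜).symm A i j)‖ ≤ C) :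
    ‖toEuclideanCLM (𝕜 := 𝕜) A‖ ≤ √(R * C) := by
  refine ContinuousLinearMap.opNorm_le_bound _ (Real.sqrt_nonneg _) fun x => ?_
  set B := (comp ι ι m m 𝕜).symm A
  have hsq : ‖toEuclideanCLM (𝕜 := 𝕜) A x‖ ^ 2 ≤ R * C * ‖x‖ ^ 2 := calc
    ‖toEuclideanCLM (𝕜 := 𝕜) A x‖ ^ 2
        = ∑ i, ‖∑ j, toEuclideanCLM (𝕜 := 𝕜) (B i j) (blockVec x j)‖ ^ 2 := by
      simp only [norm_sq_eq_sum_norm_sq_blockVec, blockVec_toEuclideanCLM, B]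
    _ ≤ ∑ i, (∑ j, ‖toEuclideanCLM (𝕜 := 𝕜) (B i j)‖ * ‖blockVec x j‖) ^ 2 := by
      gcongr with i
      exact (norm_sum_le _ _).trans
        (sum_le_sum fun j _ => (toEuclideanCLM (𝕜 := 𝕜) (B i j)).le_opNorm _)
    _ ≤ R * C * ‖x‖ ^ 2 := by
      rw [norm_sq_eq_sum_norm_sq_blockVec]
      exact sum_sq_sum_mul_le_of_row_col_sum_le (fun _ _ => norm_nonneg _) hR₀ hR hC _
  calc ‖toEuclideanCLM (𝕜 := 𝕜) A x‖ = √(‖toEuclideanCLM (𝕜 := 𝕜) A x‖ ^ 2) :=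
        (Real.sqrt_sq (norm_nonneg _)).symm
    _ ≤ √(R * C * ‖x‖ ^ 2) := Real.sqrt_le_sqrt hsq
    _ = √(R * C) * ‖x‖ := by rw [Real.sqrt_mul' _ (sq_nonneg _), Real.sqrt_sq (norm_nonneg _)]

theorem norm_toEuclideanCLM_le_iSup_max_block_sums (A : Matrix (ι × m) (ι × m) 𝕜) :
    ‖toEuclideanCLM (𝕜 := 𝕜) A‖ ≤ ⨆ i,
      max (∑ j, ‖toEuclideanCLM (𝕜 := 𝕜) ((comp ι ι m m 𝕜).symm A i j)‖)
          (∑ j, ‖toEuclideanCLM (𝕜 := 𝕜) ((comp ι ι m m 𝕜).symm A j i)‖) := by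
  refine (norm_toEuclideanCLM_le_sqrt_of_block_sums A ?nonneg (fun i => ?_) (fun j => ?_)).trans_eq
    (Real.sqrt_mul_self ?nonneg)
  case nonneg =>
    exact Real.iSup_nonneg fun i => le_max_of_le_left (sum_nonneg fun j _ => norm_nonneg _)
  · exact le_ciSup_of_le (Finite.bddAbove_range _) i (le_max_left _ _)
  · exact le_ciSup_of_le (Finite.bddAbove_range _) j (le_max_right _ _)

end Blocks

/-- Block Gershgorin-type bound: for a block matrix `A = (A_{ij})` with equal
square blocks, `σ̄(A) ≤ max_i max{Σ_j σ̄(A_{ij}), Σ_j σ̄(A_{ji})}`. -/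
theorem stmt4 {N n : ℕ} (A : Matrix (Fin N × Fin n) (Fin N × Fin n) ℂ) :
    sigmaMax A ≤ ⨆ i : Fin N,
      max (∑ j : Fin N, sigmaMax (Matrix.of fun a b : Fin n => A (i, a) (j, b)))
          (∑ j : Fin N, sigmaMax (Matrix.of fun a b : Fin n => A (j, a) (i, b))) :=
  norm_toEuclideanCLM_le_iSup_max_block_sums A
end

section
/- Let A, B ∈ ℝ^{n×n} and let C be the 2n×2n block matrix C = [[A, −B], [B, A]]. Then the set of singular values of C equals the union of the set of singular values of A − iB and the set of singular values of A + iB. -/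
/-!
`Cᴴ C` has the same block shape as `C`: it is `[[S, -K], [K, S]]` with `S = AᴴA + BᴴB` and
`K = AᴴB - BᴴA`, while `(A ∓ iB)ᴴ (A ∓ iB) = S ∓ iK`. The change of coordinates
`(u, x) ↦ (u - ix, u + ix)` conjugates `[[S, -K], [K, S]]` into `diag(S - iK, S + iK)`, whose
eigenvalues are those of `S - iK` together with those of `S + iK`.
-/

open Matrix

/-- The set of singular values of a square complex matrix `A`: nonnegative
reals `σ` such that `σ²` is an eigenvalue of `Aᴴ A`. -/
def svSet {m : Type*} [Fintype m] (A : Matrix m m ℂ) : Set ℝ :=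
  {σ | 0 ≤ σ ∧ ∃ v : m → ℂ, v ≠ 0 ∧ (Aᴴ * A).mulVec v = ((σ : ℂ) ^ 2) • v}

section Eigenvectors

variable {R m n : Type*} [Fintype m] [Fintype n]

theorem exists_eigenvector_fromBlocks_zero_zero_iff [Semiring R] (D₁ : Matrix m m R)
    (D₂ : Matrix n n R) (μ : R) :
    (∃ w : m ⊕ n → R, w ≠ 0 ∧ fromBlocks D₁ 0 0 D₂ *ᵥ w = μ • w) ↔
      (∃ v : m → R, v ≠ 0 ∧ D₁ *ᵥ v = μ • v) ∨ (∃ v : n → R, v ≠ 0 ∧ D₂ *ᵥ v = μ • v) := by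
  have hmulVec : ∀ (u : m → R) (v : n → R),
      fromBlocks D₁ 0 0 D₂ *ᵥ Sum.elim u v = Sum.elim (D₁ *ᵥ u) (D₂ *ᵥ v) := by
    intro u v
    simp [fromBlocks_mulVec]
  have hsmul : ∀ (u : m → R) (v : n → R), μ • Sum.elim u v = Sum.elim (μ • u) (μ • v) :=
    fun u v => Sum.comp_elim (μ • ·) u v
  constructor
  · rintro ⟨w, hw, hDw⟩
    rw [← Sum.elim_comp_inl_inr w, hmulVec, hsmul] at hDw
    have h₁ := congrArg (· ∘ Sum.inl) hDw
    have h₂ := congrArg (· ∘ Sum.inr) hDw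
    simp only [Sum.elim_comp_inl, Sum.elim_comp_inr] at h₁ h₂
    by_cases hl : w ∘ Sum.inl = 0
    · refine .inr ⟨w ∘ Sum.inr, fun hr => hw ?_, h₂⟩
      rw [← Sum.elim_comp_inl_inr w, hl, hr, Sum.elim_zero_zero]
    · exact .inl ⟨w ∘ Sum.inl, hl, h₁⟩
  · rintro (⟨v, hv, hDv⟩ | ⟨v, hv, hDv⟩)
    · refine ⟨Sum.elim v 0, fun h => hv ?_, ?_⟩
      · simpa using congrArg (· ∘ Sum.inl) h
      · rw [hmulVec, hDv, mulVec_zero, hsmul, smul_zero]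
    · refine ⟨Sum.elim 0 v, fun h => hv ?_, ?_⟩
      · simpa using congrArg (· ∘ Sum.inr) h
      · rw [hmulVec, hDv, mulVec_zero, hsmul, smul_zero]

theorem exists_eigenvector_of_semiconjBy [CommSemiring R] [DecidableEq n]
    {A B P : Matrix n n R} (hP : IsUnit P) (h : SemiconjBy P A B) {μ : R}
    (hA : ∃ v : n → R, v ≠ 0 ∧ A *ᵥ v = μ • v) : ∃ v : n → R, v ≠ 0 ∧ B *ᵥ v = μ • v := by
  obtain ⟨v, hv, hAv⟩ := hA
  refine ⟨P *ᵥ v, by simpa using (mulVec_injective_of_isUnit hP).ne hv, ?_⟩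
  rw [mulVec_mulVec, ← h.eq, ← mulVec_mulVec, hAv, mulVec_smul]

theorem exists_eigenvector_iff_of_semiconjBy [CommSemiring R] [DecidableEq n]
    {A B : Matrix n n R} (P : (Matrix n n R)ˣ) (h : SemiconjBy (P : Matrix n n R) A B) (μ : R) :
    (∃ v : n → R, v ≠ 0 ∧ A *ᵥ v = μ • v) ↔ (∃ v : n → R, v ≠ 0 ∧ B *ᵥ v = μ • v) :=
  ⟨exists_eigenvector_of_semiconjBy P.isUnit h,
    exists_eigenvector_of_semiconjBy P⁻¹.isUnit h.units_inv_symm_left⟩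

theorem exists_eigenvector_fromBlocks_neg_iff [CommRing R] [DecidableEq n] [Invertible (2 : R)]
    {i : R} (hi : i * i = -1) (S K : Matrix n n R) (μ : R) :
    (∃ w : n ⊕ n → R, w ≠ 0 ∧ fromBlocks S (-K) K S *ᵥ w = μ • w) ↔
      (∃ v : n → R, v ≠ 0 ∧ (S - i • K) *ᵥ v = μ • v) ∨
        (∃ v : n → R, v ≠ 0 ∧ (S + i • K) *ᵥ v = μ • v) := by
  set P : Matrix (n ⊕ n) (n ⊕ n) R := fromBlocks 1 (-i • 1) 1 (i • 1)
  set Q : Matrix (n ⊕ n) (n ⊕ n) R := ⅟(2 : R) • fromBlocks 1 1 (i • 1) (-i • 1)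
  have hQP : Q * P = 1 := by
    simp only [Q, P, Matrix.smul_mul, fromBlocks_multiply, fromBlocks_smul, ← fromBlocks_one,
      Matrix.one_mul, Matrix.mul_smul]
    congr 1 <;> match_scalars <;> grind [invOf_mul_self]
  have hP : SemiconjBy P (fromBlocks S (-K) K S) (fromBlocks (S - i • K) 0 0 (S + i • K)) := by
    simp only [SemiconjBy, P, fromBlocks_multiply, Matrix.one_mul, Matrix.mul_one,
      Matrix.smul_mul, Matrix.mul_smul]
    congr 1 <;> match_scalars <;> grind
  exact (exists_eigenvector_iff_of_semiconjBy ⟨P, Q, mul_eq_one_comm.mp hQP, hQP⟩ hP μ).trans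
    (exists_eigenvector_fromBlocks_zero_zero_iff _ _ μ)

end Eigenvectors

section ConjTranspose

variable {n : Type*} [Fintype n]

theorem conjTranspose_mul_self_fromBlocks_neg {R : Type*} [Ring R] [StarRing R]
    (M N : Matrix n n R) :
    (fromBlocks M (-N) N M)ᴴ * fromBlocks M (-N) N M =
      fromBlocks (Mᴴ * M + Nᴴ * N) (-(Mᴴ * N - Nᴴ * M)) (Mᴴ * N - Nᴴ * M) (Mᴴ * M + Nᴴ * N) := by
  rw [fromBlocks_conjTranspose, fromBlocks_multiply, conjTranspose_neg]
  congr 1 <;> noncomm_ring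

theorem conjTranspose_mul_self_sub_I_smul (M N : Matrix n n ℂ) :
    (M - Complex.I • N)ᴴ * (M - Complex.I • N) =
      Mᴴ * M + Nᴴ * N - Complex.I • (Mᴴ * N - Nᴴ * M) := by
  simp only [conjTranspose_sub, conjTranspose_smul, Complex.star_def, Complex.conj_I,
    sub_mul, mul_sub, Matrix.smul_mul, Matrix.mul_smul, smul_smul]
  match_scalars <;> grind [Complex.I_mul_I]

theorem conjTranspose_mul_self_add_I_smul (M N : Matrix n n ℂ) :
    (M + Complex.I • N)ᴴ * (M + Complex.I • N) =
      Mᴴ * M + Nᴴ * N + Complex.I • (Mᴴ * N - Nᴴ * M) := by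
  simp only [conjTranspose_add, conjTranspose_smul, Complex.star_def, Complex.conj_I,
    add_mul, mul_add, Matrix.smul_mul, Matrix.mul_smul, smul_smul]
  match_scalars <;> grind [Complex.I_mul_I]

theorem svSet_fromBlocks_neg [DecidableEq n] (M N : Matrix n n ℂ) :
    svSet (fromBlocks M (-N) N M) = svSet (M - Complex.I • N) ∪ svSet (M + Complex.I • N) := by
  ext σ
  simp only [svSet, Set.mem_ofPred_eq, Set.mem_union, conjTranspose_mul_self_fromBlocks_neg,
    conjTranspose_mul_self_sub_I_smul, conjTranspose_mul_self_add_I_smul,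
    exists_eigenvector_fromBlocks_neg_iff Complex.I_mul_I]
  exact and_or_left

end ConjTranspose

/-- For real `A`, `B` and `C = [[A, -B], [B, A]]`, the singular values of `C`
are exactly the singular values of `A - iB` together with those of `A + iB`. -/
theorem stmt5 {n : ℕ} (A B : Matrix (Fin n) (Fin n) ℝ) :
    svSet ((Matrix.fromBlocks A (-B) B A).map (Complex.ofReal)) =
      svSet (A.map (Complex.ofReal) - Complex.I • B.map (Complex.ofReal)) ∪
      svSet (A.map (Complex.ofReal) + Complex.I • B.map (Complex.ofReal)) := by
  rw [fromBlocks_map, Matrix.map_neg _ Complex.ofReal_neg]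
  exact svSet_fromBlocks_neg _ _
end

section
/- For every choice of h̄ > 0 and 0 < λ₂ ≤ λ_N, there exist 0 < μ₁ < μ₂ such that (μ₁+μ₂)/(h̄ + max{h̄, 2μ₁}) > λ_N/λ₂; consequently the controller gains (k₁, k₂) satisfying the design inequalities always exist. -/
/-!
Take `μ₁ = h̄/2` and `μ₂ = h̄/2 + 2h̄λ_N/λ₂`, so that `max h̄ (2μ₁) = h̄` and
`(μ₁ + μ₂)/(2h̄) = 1/2 + λ_N/λ₂`. For these `μ`'s the bounds on `k₁`, `k₂` and `k₂ - k₁`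
become `2/(h̄(λ₂+λ_N))`, `(4/(h̄(λ₂+2λ_N)), 2/(h̄λ_N))` and `2λ₂/(h̄λ_N(λ₂+λ_N))`; the bounds
on `k₁` and `k₂ - k₁` add up to the upper bound on `k₂`, so the gains exist as soon as the
interval for `k₂` is nonempty.
-/

theorem exists_gains_of_lt {A B C D : ℝ} (hA : 0 < A) (hD : 0 < D) (hB : 0 < B)
    (hCB : C < B) (hCAD : C < A + D) :
    ∃ k₁ k₂ : ℝ, (A > k₁ ∧ k₁ > 0) ∧ (B > k₂ ∧ k₂ > C) ∧ (D > k₂ - k₁ ∧ k₂ - k₁ > 0) := by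
  obtain ⟨k₂, hk₂⟩ := exists_between <|
    max_lt (lt_min hCB hCAD) (lt_min hB (by linarith : (0 : ℝ) < A + D))
  simp only [max_lt_iff, lt_min_iff] at hk₂
  obtain ⟨k₁, hk₁⟩ := exists_between <|
    max_lt (lt_min hA hk₂.1.2) (lt_min (by linarith : k₂ - D < A) (by linarith : k₂ - D < k₂))
  simp only [max_lt_iff, lt_min_iff] at hk₁
  exact ⟨k₁, k₂, ⟨hk₁.2.1, hk₁.1.1⟩, ⟨hk₂.2.1, hk₂.1.1⟩, by linarith, by linarith⟩

/-- For any `h̄ > 0` and `0 < λ₂ ≤ λ_N` there exist `0 < μ₁ < μ₂` making the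
consistency condition hold, and consequently controller gains `(k₁, k₂)`
satisfying the design inequalities always exist. -/
theorem stmt12 (hbar lam2 lamN : ℝ)
    (hh : 0 < hbar) (hl2 : 0 < lam2) (hlN : lam2 ≤ lamN) :
    ∃ mu1 mu2 : ℝ, 0 < mu1 ∧ mu1 < mu2 ∧
      (mu1 + mu2) / (hbar + max hbar (2 * mu1)) > lamN / lam2 ∧
      ∃ k₁ k₂ : ℝ,
        (2 * (mu2 - mu1) / (hbar * lamN * (mu1 + mu2 + hbar)) > k₁ ∧ k₁ > 0) ∧
        (min (2 / (hbar * lamN)) (4 / (lamN * (2 * mu1 + hbar))) > k₂ ∧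
          k₂ > 4 / (lam2 * (mu1 + mu2))) ∧
        (4 / (lamN * (mu1 + mu2 + hbar)) > k₂ - k₁ ∧ k₂ - k₁ > 0) := by
  have hN : 0 < lamN := hl2.trans_le hlN
  have hgap : 0 < 2 * hbar * lamN / lam2 := by positivity
  refine ⟨hbar / 2, hbar / 2 + 2 * hbar * lamN / lam2, by positivity, by linarith, ?_, ?_⟩
  · have hmax : max hbar (2 * (hbar / 2)) = hbar := by
      rw [mul_div_cancel₀ _ two_ne_zero, max_self]
    have hratio : (hbar / 2 + (hbar / 2 + 2 * hbar * lamN / lam2)) / (hbar + hbar)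
        = 1 / 2 + lamN / lam2 := by field_simp; ring
    rw [hmax, hratio]
    linarith
  · have hA : 2 * (hbar / 2 + 2 * hbar * lamN / lam2 - hbar / 2) /
        (hbar * lamN * (hbar / 2 + (hbar / 2 + 2 * hbar * lamN / lam2) + hbar))
        = 2 / (hbar * (lam2 + lamN)) := by field_simp; ring
    have hB : 4 / (lamN * (2 * (hbar / 2) + hbar)) = 2 / (hbar * lamN) := by
      field_simp; ring
    have hC : 4 / (lam2 * (hbar / 2 + (hbar / 2 + 2 * hbar * lamN / lam2)))
        = 4 / (hbar * (lam2 + 2 * lamN)) := by field_simp; ring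
    have hD : 4 / (lamN * (hbar / 2 + (hbar / 2 + 2 * hbar * lamN / lam2) + hbar))
        = 2 * lam2 / (hbar * lamN * (lam2 + lamN)) := by field_simp; ring
    have hsum : 2 / (hbar * (lam2 + lamN)) + 2 * lam2 / (hbar * lamN * (lam2 + lamN))
        = 2 / (hbar * lamN) := by field_simp; ring
    have hCB : 4 / (hbar * (lam2 + 2 * lamN)) < 2 / (hbar * lamN) := by
      rw [div_lt_div_iff₀ (by positivity) (by positivity)]; nlinarith [mul_pos hh hl2]
    rw [hA, hB, min_self, hC, hD]
    exact exists_gains_of_lt (by positivity) (by positivity) (by positivity) hCB (hsum ▸ hCB)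
end
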